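/- Let X ⊆ P^n be a 0-dimensional scheme avoiding Z^+(X_0), with x_0 a non-zerodivisor on R_X. Then the annihilator of dx_0 in Ω^1_{R_X/K} is zero, and consequently HF_{Ω^1_{R_X/K[x_0]}}(i) = HF_{Ω^1_{R_X/K}}(i) - HF_X(i-1) for all i ∈ ℤ. -/

import Mathlib

open MvPolynomial

set_option maxHeartbeats 1000000
set_option synthInstance.maxHeartbeats 400000

/-- The degree-`i` homogeneous component of the coordinate ring `R_X = S/I`. -/
noncomputable def coordPiece (K : Type) [Field K] (n : ℕ)
    (I : Ideal (MvPolynomial (Fin (n + 1)) K)) (i : ℕ) :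
    Submodule K (MvPolynomial (Fin (n + 1)) K ⧸ I) :=
  Submodule.span K {g | ∃ f : MvPolynomial (Fin (n + 1)) K,
    f.IsHomogeneous i ∧ g = Ideal.Quotient.mk I f}

/-- The degree-`i` homogeneous component of `Ω¹_{R_X/K}`:
spanned over `K` by the elements `f̄·dx_t` with `f` homogeneous of degree `i-1`. -/
noncomputable def omega1Piece (K : Type) [Field K] (n : ℕ)
    (I : Ideal (MvPolynomial (Fin (n + 1)) K)) (i : ℕ) :
    Submodule K (Ω[(MvPolynomial (Fin (n + 1)) K ⧸ I)⁄K]) :=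
  Submodule.span K {w | ∃ (j : ℕ) (f : MvPolynomial (Fin (n + 1)) K) (t : Fin (n + 1)),
    i = j + 1 ∧ f.IsHomogeneous j ∧
    w = Ideal.Quotient.mk I f •
      KaehlerDifferential.D K (MvPolynomial (Fin (n + 1)) K ⧸ I)
        (Ideal.Quotient.mk I (MvPolynomial.X t))}

/-- The degree-`i` homogeneous component of the relative Kähler differential
module `Ω¹_{R_X/K[x_0]}`, where `K[x_0]` is the subalgebra of `R_X` generated
by `x_0`. -/
noncomputable def relOmega1Piece (K : Type) [Field K] (n : ℕ)
    (I : Ideal (MvPolynomial (Fin (n + 1)) K)) (i : ℕ) :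
    Submodule K (Ω[(MvPolynomial (Fin (n + 1)) K ⧸ I)⁄
      ↥(Algebra.adjoin K ({Ideal.Quotient.mk I (MvPolynomial.X 0)} :
        Set (MvPolynomial (Fin (n + 1)) K ⧸ I)))]) :=
  Submodule.span K {w | ∃ (j : ℕ) (f : MvPolynomial (Fin (n + 1)) K) (t : Fin (n + 1)),
    i = j + 1 ∧ f.IsHomogeneous j ∧
    w = Ideal.Quotient.mk I f •
      KaehlerDifferential.D
        (↥(Algebra.adjoin K ({Ideal.Quotient.mk I (MvPolynomial.X 0)} :
          Set (MvPolynomial (Fin (n + 1)) K ⧸ I))))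
        (MvPolynomial (Fin (n + 1)) K ⧸ I)
        (Ideal.Quotient.mk I (MvPolynomial.X t))}

/-!
The Euler derivation `∑ xᵢ ∂/∂xᵢ` multiplies a form of degree `d` by `d`, so it preserves the
homogeneous ideal `I` and descends to `R_X`; it thus induces an `R_X`-linear contraction
`γ : Ω¹_{R_X/K} → R_X` with `γ(dxᵢ) = xᵢ`. If `f·dx₀ = 0` then `f·x₀ = γ(f·dx₀) = 0`, so `f = 0`.

The kernel of `Ω¹_{R_X/K} → Ω¹_{R_X/K[x₀]}` is `R_X·dx₀`. An element `r·dx₀` of degree `i` has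
`γ(r·dx₀) = r·x₀` of degree `i`, so `r` has degree `i - 1` because `x₀` is a non-zerodivisor and `I`
is homogeneous. Hence the kernel in degree `i` is `(R_X)_{i-1}·dx₀ ≅ (R_X)_{i-1}`, and rank–nullity
gives the formula.
-/

lemma Submodule.finrank_map_add_finrank_inf_ker {K M N : Type*} [DivisionRing K]
    [AddCommGroup M] [Module K M] [AddCommGroup N] [Module K N]
    (P : Submodule K M) [FiniteDimensional K P] (f : M →ₗ[K] N) :
    Module.finrank K (P.map f) + Module.finrank K ↥(P ⊓ LinearMap.ker f) =
      Module.finrank K P := by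
  rw [← LinearMap.range_domRestrict, ← (f.domRestrict P).finrank_range_add_finrank_ker,
    LinearMap.ker_domRestrict]
  congr 1
  refine ((Submodule.comapSubtypeEquivOfLe (inf_le_left : P ⊓ LinearMap.ker f ≤ P)).symm.trans
    (LinearEquiv.ofEq _ _ ?_)).finrank_eq
  ext w
  simp

namespace KaehlerDifferential

variable {R A : Type*} [CommRing R] [CommRing A] [Algebra R A]

lemma D_mem_span_D_image_of_mem_adjoin {s : Set A} {a : A} (ha : a ∈ Algebra.adjoin R s) :
    D R A a ∈ Submodule.span A (D R A '' s) := by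
  induction ha using Algebra.adjoin_induction with
  | mem b hb => exact Submodule.subset_span ⟨b, hb, rfl⟩
  | algebraMap c => simp
  | add b c _ _ hb hc => simpa using add_mem hb hc
  | mul b c _ _ hb hc =>
    rw [Derivation.leibniz]
    exact add_mem (Submodule.smul_mem _ _ hc) (Submodule.smul_mem _ _ hb)

lemma D_eq_zero_of_mem {B : Subalgebra R A} {x : A} (hx : x ∈ B) : D B A x = 0 :=
  (D B A).map_algebraMap ⟨x, hx⟩

lemma ker_map_adjoin (s : Set A) :
    LinearMap.ker (map R (Algebra.adjoin R s) A A) = Submodule.span A (D R A '' s) := by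
  apply le_antisymm
  · rw [← range_mapBaseChange]
    rintro _ ⟨y, rfl⟩
    induction y with
    | zero => simp
    | add u v hu hv => simpa using add_mem hu hv
    | tmul b ω =>
      rw [mapBaseChange_tmul]
      refine Submodule.smul_mem _ _ ?_
      have hω : ω ∈ Submodule.span (Algebra.adjoin R s) (Set.range (D R _)) := by
        rw [span_range_derivation]
        exact Submodule.mem_top
      induction hω using Submodule.span_induction with
      | mem v hv =>
        obtain ⟨b, rfl⟩ := hv
        rw [map_D]
        exact D_mem_span_D_image_of_mem_adjoin b.2
      | zero => simp
      | add u v _ _ hu hv => simpa using add_mem hu hv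
      | smul b v _ hv =>
        rw [map_smul, algebra_compatible_smul A b]
        exact Submodule.smul_mem _ _ hv
  · rw [Submodule.span_le]
    rintro _ ⟨x, hx, rfl⟩
    simp only [SetLike.mem_coe, LinearMap.mem_ker, map_D]
    exact D_eq_zero_of_mem (Algebra.subset_adjoin hx)

lemma eq_zero_of_smul_D_eq_zero (δ : Derivation R A A) {x : A}
    (hx : ∀ r, δ x * r = 0 → r = 0) {r : A} (h : r • D R A x = 0) : r = 0 := by
  have := congrArg δ.liftKaehlerDifferential h
  rw [map_smul, Derivation.liftKaehlerDifferential_comp_D, map_zero, smul_eq_mul, mul_comm] at this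
  exact hx r this

end KaehlerDifferential

namespace MvPolynomial

section CommSemiring

variable {σ R : Type*} [CommSemiring R]

lemma homogeneousComponent_add_mul {i : ℕ} {p : MvPolynomial σ R} (hp : p.IsHomogeneous i)
    (j : ℕ) (q : MvPolynomial σ R) :
    homogeneousComponent (i + j) (p * q) = p * homogeneousComponent j q := by
  let _ := MvPolynomial.gradedAlgebra (σ := σ) (R := R)
  rw [← decomposition.decompose'_apply, ← decomposition.decompose'_apply]
  exact DirectSum.coe_decompose_mul_add_of_left_mem (homogeneousSubmodule σ R) hp

lemma mkDerivation_X_eq_sum_X_mul_pderiv [Fintype σ] (φ : MvPolynomial σ R) :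
    mkDerivation R X φ = ∑ i, X i * pderiv i φ := by
  suffices h : mkDerivation R X = ∑ i, (X i : MvPolynomial σ R) • pderiv i by
    rw [h, ← Derivation.coeFnAddMonoidHom_apply, map_sum, Finset.sum_apply]
    rfl
  classical
  refine derivation_ext fun j => ?_
  rw [mkDerivation_X, ← Derivation.coeFnAddMonoidHom_apply, map_sum, Finset.sum_apply]
  simp [Derivation.smul_apply, pderiv_X, Pi.single_apply]

lemma mkDerivation_X_of_isHomogeneous [Fintype σ] {d : ℕ} {φ : MvPolynomial σ R}
    (hφ : φ.IsHomogeneous d) : mkDerivation R X φ = d • φ := by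
  rw [mkDerivation_X_eq_sum_X_mul_pderiv, hφ.sum_X_mul_pderiv]

lemma mkDerivation_X_mem_of_mem [Fintype σ] {I : Ideal (MvPolynomial σ R)}
    (hI : ∀ f ∈ I, ∀ d : ℕ, homogeneousComponent d f ∈ I) {f : MvPolynomial σ R} (hf : f ∈ I) :
    mkDerivation R X f ∈ I := by
  rw [← f.sum_homogeneousComponent, map_sum]
  refine Ideal.sum_mem _ fun d _ => ?_
  rw [mkDerivation_X_of_isHomogeneous (homogeneousComponent_isHomogeneous d f)]
  exact Submodule.smul_of_tower_mem _ _ (hI f hf d)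

end CommSemiring

variable {σ R : Type*} [CommRing R] [Fintype σ] {I : Ideal (MvPolynomial σ R)}

variable (I) in
noncomputable def eulerDerivation (hI : ∀ f ∈ I, ∀ d : ℕ, homogeneousComponent d f ∈ I) :
    Derivation R (MvPolynomial σ R ⧸ I) (MvPolynomial σ R ⧸ I) :=
  Derivation.liftOfRightInverse (f := Ideal.Quotient.mkₐ R I)
    (Function.rightInverse_surjInv Ideal.Quotient.mk_surjective) (d := mkDerivation R X)
    fun f hf => by
      simp only [Ideal.Quotient.mkₐ_eq_mk, Ideal.Quotient.eq_zero_iff_mem] at hf ⊢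
      exact mkDerivation_X_mem_of_mem hI hf

lemma eulerDerivation_mk (hI : ∀ f ∈ I, ∀ d : ℕ, homogeneousComponent d f ∈ I)
    (f : MvPolynomial σ R) :
    eulerDerivation I hI (Ideal.Quotient.mk I f) = Ideal.Quotient.mk I (mkDerivation R X f) :=
  Derivation.liftOfRightInverse_apply _ _ f

@[simp]
lemma eulerDerivation_mk_X (hI : ∀ f ∈ I, ∀ d : ℕ, homogeneousComponent d f ∈ I) (i : σ) :
    eulerDerivation I hI (Ideal.Quotient.mk I (X i)) = Ideal.Quotient.mk I (X i) := by
  rw [eulerDerivation_mk, mkDerivation_X]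

end MvPolynomial

section HilbertFunction

open KaehlerDifferential

variable {K : Type} [Field K] {n : ℕ} (I : Ideal (MvPolynomial (Fin (n + 1)) K))

local notation "R_X" => MvPolynomial (Fin (n + 1)) K ⧸ I
local notation "x₀" => Ideal.Quotient.mk I (MvPolynomial.X (0 : Fin (n + 1)))

lemma mem_coordPiece_iff {i : ℕ} {g : R_X} :
    g ∈ coordPiece K n I i ↔ ∃ f : MvPolynomial (Fin (n + 1)) K,
      f.IsHomogeneous i ∧ Ideal.Quotient.mk I f = g := by
  have : coordPiece K n I i =
      (homogeneousSubmodule (Fin (n + 1)) K i).map (Ideal.Quotient.mkₐ K I).toLinearMap := by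
    rw [coordPiece, ← Submodule.span_eq (Submodule.map _ _), Submodule.map_coe]
    congr 1
    ext g
    simp [eq_comm]
  rw [this]
  simp

lemma mem_coordPiece_of_mul_mem (hI : ∀ f ∈ I, ∀ d : ℕ, homogeneousComponent d f ∈ I)
    {d j : ℕ} {p : MvPolynomial (Fin (n + 1)) K} (hp : p.IsHomogeneous d)
    (hreg : ∀ r : R_X, Ideal.Quotient.mk I p * r = 0 → r = 0) {r : R_X}
    (h : Ideal.Quotient.mk I p * r ∈ coordPiece K n I (d + j)) : r ∈ coordPiece K n I j := by
  obtain ⟨q, hq, hpr⟩ := (mem_coordPiece_iff I).1 h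
  obtain ⟨g, rfl⟩ := Ideal.Quotient.mk_surjective r
  have hmem : p * g - q ∈ I := by
    rw [← Ideal.Quotient.eq_zero_iff_mem, map_sub, map_mul, hpr, sub_self]
  have hcomp := hI _ hmem (d + j)
  rw [map_sub, homogeneousComponent_add_mul hp, homogeneousComponent_eq_self hq,
    ← Ideal.Quotient.eq_zero_iff_mem, map_sub, map_mul, hpr, ← mul_sub] at hcomp
  refine (mem_coordPiece_iff I).2 ⟨_, homogeneousComponent_isHomogeneous j g, ?_⟩
  rw [← sub_eq_zero]
  exact hreg _ hcomp

lemma liftKaehlerDifferential_eulerDerivation_mem_coordPiece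
    (hI : ∀ f ∈ I, ∀ d : ℕ, homogeneousComponent d f ∈ I) {i : ℕ} {w : Ω[R_X⁄K]}
    (hw : w ∈ omega1Piece K n I i) :
    (eulerDerivation I hI).liftKaehlerDifferential w ∈ coordPiece K n I i := by
  induction hw using Submodule.span_induction with
  | mem w hw =>
    obtain ⟨j, f, t, rfl, hf, rfl⟩ := hw
    rw [map_smul, Derivation.liftKaehlerDifferential_comp_D, eulerDerivation_mk_X, smul_eq_mul,
      ← map_mul]
    exact (mem_coordPiece_iff I).2 ⟨_, hf.mul (isHomogeneous_X K t), rfl⟩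
  | zero => simp
  | add u v _ _ hu hv => simpa using add_mem hu hv
  | smul c u _ hu =>
    rw [LinearMap.map_smul_of_tower]
    exact Submodule.smul_mem _ _ hu

lemma map_omega1Piece (i : ℕ) :
    (omega1Piece K n I i).map ((map K (Algebra.adjoin K {x₀}) R_X R_X).restrictScalars K) =
      relOmega1Piece K n I i := by
  rw [omega1Piece, relOmega1Piece, Submodule.map_span]
  congr 1
  ext w
  constructor
  · rintro ⟨_, ⟨j, f, t, hi, hf, rfl⟩, rfl⟩
    exact ⟨j, f, t, hi, hf, by simp [map_D]⟩
  · rintro ⟨j, f, t, hi, hf, rfl⟩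
    exact ⟨_, ⟨j, f, t, hi, hf, rfl⟩, by simp [map_D]⟩

lemma omega1Piece_inf_ker (hI : ∀ f ∈ I, ∀ d : ℕ, homogeneousComponent d f ∈ I)
    (hx0 : ∀ r : R_X, x₀ * r = 0 → r = 0) (j : ℕ) :
    omega1Piece K n I (j + 1) ⊓
        LinearMap.ker ((map K (Algebra.adjoin K {x₀}) R_X R_X).restrictScalars K) =
      (coordPiece K n I j).map
        ((LinearMap.toSpanSingleton R_X Ω[R_X⁄K] (D K R_X x₀)).restrictScalars K) := by
  apply le_antisymm
  · rintro w ⟨hw, hker⟩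
    have hspan : w ∈ Submodule.span R_X {D K R_X x₀} := by
      rw [← Set.image_singleton, ← ker_map_adjoin]
      exact hker
    obtain ⟨r, rfl⟩ := Submodule.mem_span_singleton.1 hspan
    refine ⟨r, ?_, rfl⟩
    have := liftKaehlerDifferential_eulerDerivation_mem_coordPiece I hI hw
    rw [map_smul, Derivation.liftKaehlerDifferential_comp_D, eulerDerivation_mk_X, smul_eq_mul,
      mul_comm, add_comm j 1] at this
    exact mem_coordPiece_of_mul_mem I hI (isHomogeneous_X K 0) hx0 this
  · rintro _ ⟨r, hr, rfl⟩
    obtain ⟨f, hf, rfl⟩ := (mem_coordPiece_iff I).1 hr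
    refine ⟨Submodule.subset_span ⟨j, f, 0, rfl, hf, rfl⟩, ?_⟩
    simp [map_D, D_eq_zero_of_mem (Algebra.self_mem_adjoin_singleton K x₀)]

instance finiteDimensional_omega1Piece (i : ℕ) : FiniteDimensional K (omega1Piece K n I i) := by
  have : FiniteDimensional K (homogeneousSubmodule (Fin (n + 1)) K (i - 1)) :=
    Module.Finite.iff_fg.2 (homogeneousSubmodule_fg _ _ _)
  refine Submodule.finiteDimensional_of_le (S₂ := ⨆ t : Fin (n + 1),
    (homogeneousSubmodule (Fin (n + 1)) K (i - 1)).map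
      ((LinearMap.toSpanSingleton R_X _ (D K R_X (Ideal.Quotient.mk I (X t)))).restrictScalars K ∘ₗ
        (Ideal.Quotient.mkₐ K I).toLinearMap)) ?_
  rw [omega1Piece, Submodule.span_le]
  rintro _ ⟨j, f, t, rfl, hf, rfl⟩
  exact Submodule.mem_iSup_of_mem t ⟨f, hf, rfl⟩

end HilbertFunction

theorem relative_kaehler_hilbert_function_general (K : Type) [Field K] (n : ℕ)
    (I : Ideal (MvPolynomial (Fin (n + 1)) K))
    (hI : ∀ f ∈ I, ∀ d : ℕ, MvPolynomial.homogeneousComponent d f ∈ I)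
    (hx0 : ∀ r : MvPolynomial (Fin (n + 1)) K ⧸ I,
      Ideal.Quotient.mk I (MvPolynomial.X 0) * r = 0 → r = 0) :
    (∀ f : MvPolynomial (Fin (n + 1)) K ⧸ I,
      f • KaehlerDifferential.D K (MvPolynomial (Fin (n + 1)) K ⧸ I)
          (Ideal.Quotient.mk I (MvPolynomial.X 0)) = 0 → f = 0) ∧
    (∀ i : ℕ, 1 ≤ i →
      (Module.finrank K (relOmega1Piece K n I i) : ℤ) =
        (Module.finrank K (omega1Piece K n I i) : ℤ) -
          (Module.finrank K (coordPiece K n I (i - 1)) : ℤ)) := by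
  have ann_dx₀ : ∀ f : MvPolynomial (Fin (n + 1)) K ⧸ I,
      f • KaehlerDifferential.D K _ (Ideal.Quotient.mk I (X 0)) = 0 → f = 0 :=
    fun f => KaehlerDifferential.eq_zero_of_smul_D_eq_zero (eulerDerivation I hI)
      (by simpa using hx0)
  have smul_dx₀_injective : Function.Injective
      ((LinearMap.toSpanSingleton (MvPolynomial (Fin (n + 1)) K ⧸ I) _ (KaehlerDifferential.D K
        (MvPolynomial (Fin (n + 1)) K ⧸ I) (Ideal.Quotient.mk I (X 0)))).restrictScalars K) :=
    (injective_iff_map_eq_zero _).2 ann_dx₀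
  refine ⟨ann_dx₀, fun i hi => ?_⟩
  obtain ⟨j, rfl⟩ := Nat.exists_eq_add_of_le' hi
  have rank_nullity := (omega1Piece K n I (j + 1)).finrank_map_add_finrank_inf_ker
    ((KaehlerDifferential.map K (Algebra.adjoin K {Ideal.Quotient.mk I (X 0)})
      (MvPolynomial (Fin (n + 1)) K ⧸ I) (MvPolynomial (Fin (n + 1)) K ⧸ I)).restrictScalars K)
  rw [map_omega1Piece, omega1Piece_inf_ker I hI hx0,
    ← (Submodule.equivMapOfInjective _ smul_dx₀_injective _).finrank_eq] at rank_nullity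
  rw [Nat.add_sub_cancel]
  omega

/-- Let `X ⊆ ℙⁿ` be a 0-dimensional scheme avoiding `Z⁺(X_0)`, so that `x_0`
is a non-zerodivisor on `R_X` (hypothesis `hx0`).  Then the annihilator of
`dx_0` in `Ω¹_{R_X/K}` is zero, and consequently
`HF_{Ω¹_{R_X/K[x_0]}}(i) = HF_{Ω¹_{R_X/K}}(i) - HF_X(i-1)` for all `i ≥ 1`
(the identity in degrees `i ≤ 0` being trivially `0 = 0 - 0`). -/
theorem relative_kaehler_hilbert_function (K : Type) [Field K] [CharZero K] (n : ℕ)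
    (I : Ideal (MvPolynomial (Fin (n + 1)) K))
    (hI : ∀ f ∈ I, ∀ d : ℕ, MvPolynomial.homogeneousComponent d f ∈ I)
    (hx0 : ∀ r : MvPolynomial (Fin (n + 1)) K ⧸ I,
      Ideal.Quotient.mk I (MvPolynomial.X 0) * r = 0 → r = 0) :
    (∀ f : MvPolynomial (Fin (n + 1)) K ⧸ I,
      f • KaehlerDifferential.D K (MvPolynomial (Fin (n + 1)) K ⧸ I)
          (Ideal.Quotient.mk I (MvPolynomial.X 0)) = 0 → f = 0) ∧
    (∀ i : ℕ, 1 ≤ i →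
      (Module.finrank K (relOmega1Piece K n I i) : ℤ) =
        (Module.finrank K (omega1Piece K n I i) : ℤ) -
          (Module.finrank K (coordPiece K n I (i - 1)) : ℤ)) :=
  relative_kaehler_hilbert_function_general K n I hI hx0
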